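/- arXiv:2504.00571 — 2 statements merged into one kernel-verified Lean document; each statement's English description precedes it below -/
import Mathlib

section
/- For a finite cyclic group C_n and x ∈ C_n of order d, if N([x]) denotes the set of vertices outside [x] = {generators of ⟨x⟩} adjacent to some (equivalently, every) element of [x] in the power graph of C_n, then |N([x])| = d − 2φ(d) + sum over divisors e of n/d of φ(n/e). -/
/-- The power graph of a group: distinct vertices are adjacent iff
one is a power of the other. -/
def powerGraph (G : Type*) [Group G] : SimpleGraph G where
  Adj x y := x ≠ y ∧ (x ∈ Subgroup.zpowers y ∨ y ∈ Subgroup.zpowers x)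
  symm := ⟨fun x y ⟨h1, h2⟩ => ⟨h1.symm, h2.symm⟩⟩
  loopless := ⟨fun x ⟨h, _⟩ => h rfl⟩

/-- `v` lies in a connected component containing a cycle. -/
def InCyclicComp {V : Type*} (Γ : SimpleGraph V) (v : V) : Prop :=
  ∃ w, Γ.Reachable v w ∧ ∃ c : Γ.Walk w w, c.IsCycle

/-- `S` is a cyclic vertex cutset: `Γ - S` is disconnected with at least two
components containing cycles. -/
def IsCyclicCutset {V : Type*} (Γ : SimpleGraph V) (S : Set V) : Prop :=
  ∃ u v : ↥(Sᶜ), ¬ (Γ.induce Sᶜ).Reachable u v ∧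
    InCyclicComp (Γ.induce Sᶜ) u ∧ InCyclicComp (Γ.induce Sᶜ) v

/-- A graph is cyclically separable if it has a cyclic vertex cutset. -/
def CyclicallySeparable {V : Type*} (Γ : SimpleGraph V) : Prop :=
  ∃ S : Set V, IsCyclicCutset Γ S

/-- Vertex connectivity: the least number of vertices whose deletion
disconnects the graph or reduces it to at most one vertex. -/
noncomputable def vertexConn {V : Type*} (Γ : SimpleGraph V) : ℕ :=
  sInf {k | ∃ S : Set V, S.ncard = k ∧
    (¬ (Γ.induce Sᶜ).Connected ∨ Sᶜ.Subsingleton)}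

/-- Cyclic vertex connectivity: the least cardinality of a cyclic vertex
cutset, `∞` if there is none. -/
noncomputable def cyclicVertexConn {V : Type*} (Γ : SimpleGraph V) : ℕ∞ :=
  sInf {k : ℕ∞ | ∃ S : Set V, IsCyclicCutset Γ S ∧ k = (S.ncard : ℕ∞)}

/-- `genClass x` is `[x]`, the set of generators of `⟨x⟩`. -/
def genClass {G : Type*} [Group G] (x : G) : Set G :=
  {y | Subgroup.zpowers y = Subgroup.zpowers x}

/-- Neighbourhood of a set of vertices. -/
def setNbhd {V : Type*} (Γ : SimpleGraph V) (A : Set V) : Set V :=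
  {v | v ∉ A ∧ ∃ a ∈ A, Γ.Adj v a}

/-!
In a finite cyclic group `a ∈ ⟨b⟩` iff `o(a) ∣ o(b)`: the `o(b)` elements of `⟨b⟩` already
exhaust the at most `o(b)` solutions of `z ^ o(b) = 1`. Hence `[x]` is the set of elements of
order `d`, and `N([x])` is the set of elements whose order is a divisor or a multiple of `d` other
than `d` itself. There are `φ(m)` elements of each order `m ∣ n`: the divisors of `d` contribute
`∑_{m ∣ d} φ(m) = d`, the multiples `m = n / e` of `d` contribute `∑_{e ∣ n/d} φ(n/e)`, and
`m = d` is counted in both sums but belongs to neither.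
-/

open Finset Subgroup
open scoped Nat

namespace IsCyclic
variable {G : Type*} [Group G] [Fintype G] [IsCyclic G] {a b : G}

theorem mem_zpowers_of_pow_orderOf_eq_one (h : a ^ orderOf b = 1) : a ∈ zpowers b := by
  classical
  have hsub : (zpowers b : Set G).toFinset ⊆ ({y | y ^ orderOf b = 1} : Finset G) :=
    fun y hy => by
      simpa [orderOf_dvd_iff_pow_eq_one] using orderOf_dvd_of_mem_zpowers (by simpa using hy)
  have hcard : #{y : G | y ^ orderOf b = 1} ≤ #(zpowers b : Set G).toFinset := by
    rw [← Set.ncard_eq_toFinset_card', ← Nat.card_coe_set_eq, SetLike.coe_sort_coe,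
      Nat.card_zpowers]
    exact card_pow_eq_one_le (orderOf_pos b)
  have ha : a ∈ ({y | y ^ orderOf b = 1} : Finset G) := by simpa using h
  rw [← eq_of_subset_of_card_le hsub hcard] at ha
  simpa using ha

theorem mem_zpowers_iff_orderOf_dvd : a ∈ zpowers b ↔ orderOf a ∣ orderOf b :=
  ⟨orderOf_dvd_of_mem_zpowers,
    fun h => mem_zpowers_of_pow_orderOf_eq_one (orderOf_dvd_iff_pow_eq_one.mp h)⟩

theorem zpowers_eq_zpowers_iff : zpowers a = zpowers b ↔ orderOf a = orderOf b := by
  refine ⟨fun h => by rw [← Nat.card_zpowers, h, Nat.card_zpowers], fun h => ?_⟩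
  exact le_antisymm (zpowers_le.mpr (mem_zpowers_iff_orderOf_dvd.mpr h.dvd))
    (zpowers_le.mpr (mem_zpowers_iff_orderOf_dvd.mpr h.symm.dvd))

theorem card_filter_orderOf (P : ℕ → Prop) [DecidablePred P] :
    #{v : G | P (orderOf v)} = ∑ m ∈ (Fintype.card G).divisors with P m, φ m := by
  rw [card_eq_sum_card_fiberwise (f := orderOf) (t := (Fintype.card G).divisors.filter P)]
  · refine sum_congr rfl fun m hm => ?_
    obtain ⟨hm, hPm⟩ := mem_filter.mp hm
    rw [← card_orderOf_eq_totient (Nat.dvd_of_mem_divisors hm), filter_filter]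
    exact congrArg card (filter_congr fun v _ => ⟨And.right, fun h => ⟨h ▸ hPm, h⟩⟩)
  · intro v hv
    simp only [coe_filter, mem_univ, true_and, Nat.mem_divisors, Set.mem_ofPred_eq] at hv ⊢
    exact ⟨⟨orderOf_dvd_card, Fintype.card_ne_zero⟩, hv⟩

end IsCyclic

theorem Nat.sum_divisors_filter_dvd {M : Type*} [AddCommMonoid M] (f : ℕ → M) {n d : ℕ}
    (hn : n ≠ 0) (hdn : d ∣ n) :
    ∑ m ∈ n.divisors with d ∣ m, f m = ∑ e ∈ (n / d).divisors, f (n / e) := by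
  have hnd : n / d ≠ 0 :=
    (Nat.div_ne_zero_iff_of_dvd hdn).mpr ⟨hn, ne_zero_of_dvd_ne_zero hn hdn⟩
  refine sum_nbij' (n / ·) (n / ·) ?_ ?_ ?_ ?_ ?_
  · simp only [mem_filter, Nat.mem_divisors]
    rintro m ⟨⟨hmn, -⟩, hdm⟩
    exact ⟨Nat.div_dvd_div_left hmn hdm, hnd⟩
  · simp only [mem_filter, Nat.mem_divisors]
    rintro e ⟨hed, -⟩
    have hen : e ∣ n := hed.trans (Nat.div_dvd_of_dvd hdn)
    refine ⟨⟨Nat.div_dvd_of_dvd hen, hn⟩, ?_⟩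
    simpa [Nat.div_div_self hdn hn] using Nat.div_dvd_div_left (Nat.div_dvd_of_dvd hdn) hed
  · simp only [mem_filter, Nat.mem_divisors]
    exact fun m hm => Nat.div_div_self hm.1.1 hn
  · simp only [Nat.mem_divisors]
    exact fun e he => Nat.div_div_self (he.1.trans (Nat.div_dvd_of_dvd hdn)) hn
  · simp only [mem_filter, Nat.mem_divisors]
    exact fun m hm => by rw [Nat.div_div_self hm.1.1 hn]

theorem Nat.sum_totient_divisors_filter_ne_and_dvd_or_dvd {n d : ℕ} (hn : n ≠ 0) (hdn : d ∣ n) :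
    ∑ m ∈ n.divisors with m ≠ d ∧ (m ∣ d ∨ d ∣ m), φ m
      = d + ∑ e ∈ (n / d).divisors, φ (n / e) - 2 * φ d := by
  set A := {m ∈ n.divisors | m ∣ d}
  set B := {m ∈ n.divisors | d ∣ m}
  have hd : d ∈ n.divisors := Nat.mem_divisors.mpr ⟨hdn, hn⟩
  have hfilter : {m ∈ n.divisors | m ≠ d ∧ (m ∣ d ∨ d ∣ m)} = (A ∪ B).erase d := by
    ext m; simp only [A, B, mem_filter, mem_erase, mem_union]; tauto
  have hinter : A ∩ B = {d} := by
    ext m; simp only [A, B, mem_filter, mem_inter, mem_singleton]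
    exact ⟨fun h => Nat.dvd_antisymm h.1.2 h.2.2,
      by rintro rfl; exact ⟨⟨hd, dvd_rfl⟩, hd, dvd_rfl⟩⟩
  have hA : ∑ m ∈ A, φ m = d := by
    rw [show A = d.divisors from Nat.divisors_filter_dvd_of_dvd hn hdn, Nat.sum_totient]
  have hB : ∑ m ∈ B, φ m = ∑ e ∈ (n / d).divisors, φ (n / e) :=
    Nat.sum_divisors_filter_dvd φ hn hdn
  have hunion := sum_union_inter (s₁ := A) (s₂ := B) (f := φ)
  have herase := add_sum_erase (A ∪ B) φ (mem_union_left B (mem_filter.mpr ⟨hd, dvd_rfl⟩))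
  rw [hinter, sum_singleton] at hunion
  rw [hfilter]
  omega

section PowerGraph

variable {G : Type*} [Group G] [Fintype G] [IsCyclic G]

theorem mem_genClass_iff {x y : G} : y ∈ genClass x ↔ orderOf y = orderOf x :=
  IsCyclic.zpowers_eq_zpowers_iff

theorem powerGraph_adj_iff {u v : G} :
    (powerGraph G).Adj u v ↔ u ≠ v ∧ (orderOf u ∣ orderOf v ∨ orderOf v ∣ orderOf u) := by
  simp only [powerGraph, IsCyclic.mem_zpowers_iff_orderOf_dvd]

theorem setNbhd_powerGraph_genClass (x : G) :
    setNbhd (powerGraph G) (genClass x)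
      = {v | orderOf v ≠ orderOf x ∧ (orderOf v ∣ orderOf x ∨ orderOf x ∣ orderOf v)} := by
  ext v
  simp only [setNbhd, mem_genClass_iff, powerGraph_adj_iff, Set.mem_ofPred_eq]
  constructor
  · rintro ⟨hv, a, ha, -, hdvd⟩
    exact ⟨hv, ha ▸ hdvd⟩
  · rintro ⟨hv, hdvd⟩
    exact ⟨hv, x, rfl, fun h => hv (h ▸ rfl), hdvd⟩

theorem ncard_setNbhd_powerGraph_genClass (x : G) :
    (setNbhd (powerGraph G) (genClass x)).ncard
      = orderOf x + ∑ e ∈ (Fintype.card G / orderOf x).divisors, φ (Fintype.card G / e)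
        - 2 * φ (orderOf x) := by
  classical
  rw [setNbhd_powerGraph_genClass, Set.ncard_eq_toFinset_card', Set.toFinset_ofPred,
    IsCyclic.card_filter_orderOf (fun m => m ≠ orderOf x ∧ (m ∣ orderOf x ∨ orderOf x ∣ m))]
  exact Nat.sum_totient_divisors_filter_ne_and_dvd_or_dvd Fintype.card_ne_zero
    orderOf_dvd_card

end PowerGraph

/-- Neighbourhood formula for the generator class of an element of order d. -/
theorem stmt2 (n : ℕ) [NeZero n] (x : Multiplicative (ZMod n)) (d : ℕ)
    (hd : orderOf x = d) :
    (setNbhd (powerGraph (Multiplicative (ZMod n))) (genClass x)).ncard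
      = d + (∑ e ∈ (n / d).divisors, Nat.totient (n / e)) - 2 * Nat.totient d := by
  rw [ncard_setNbhd_powerGraph_genClass, hd, Fintype.card_multiplicative, ZMod.card]
end

section
/- For n ≥ 3, the power graph of the dihedral group D_{2n} is cyclically separable if and only if the power graph of the cyclic group C_n is cyclically separable; equivalently, iff n has at least two prime factors, n ≠ p_1p_2 for primes p_1 < p_2 with p_1 ≤ 3, and n ≠ 12. -/
open Finset SimpleGraph
open scoped Nat

namespace SimpleGraph

variable {V W : Type*} {Γ : SimpleGraph V} {Γ' : SimpleGraph W}

lemma Reachable.mem_of_adj_closed {s : Set V} (hs : ∀ ⦃x y⦄, x ∈ s → Γ.Adj x y → y ∈ s)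
    {u v : V} (h : Γ.Reachable u v) (hu : u ∈ s) : v ∈ s := by
  rw [reachable_iff_reflTransGen] at h
  induction h with
  | refl => exact hu
  | tail _ hadj ih => exact hs ih hadj

lemma Walk.IsCycle.induce {s : Set V} {u : V} {c : Γ.Walk u u} (hc : c.IsCycle)
    (hcs : ∀ x ∈ c.support, x ∈ s) : (c.induce s hcs).IsCycle :=
  (Walk.isCycle_map_iff_of_injective (Embedding.induce (G := Γ) s).injective).1
    (by rwa [Walk.map_induce])

lemma Walk.IsCycle.three_le_card_support_toFinset [DecidableEq V] {u : V} {c : Γ.Walk u u}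
    (hc : c.IsCycle) : 3 ≤ #c.support.toFinset :=
  calc 3 ≤ c.length := hc.three_le_length
    _ = #c.support.tail.toFinset := by
      rw [List.toFinset_card_of_nodup hc.support_nodup, List.length_tail, Walk.length_support]
      rfl
    _ ≤ #c.support.toFinset := card_le_card fun x hx => by
      simpa using List.mem_of_mem_tail (List.mem_toFinset.1 hx)

lemma Walk.IsCycle.notMem_support_of_subsingleton {u v : V} {c : Γ.Walk u u} (hc : c.IsCycle)
    (hv : (Γ.neighborSet v).Subsingleton) : v ∉ c.support := fun hvc => by
  obtain ⟨x, y, hxy, hnbr⟩ := Set.ncard_eq_two.1 (hc.ncard_neighborSet_toSubgraph_eq_two hvc)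
  have hsub := c.toSubgraph.neighborSet_subset v
  exact hxy (hv (hsub (hnbr ▸ by simp)) (hsub (hnbr ▸ by simp)))

lemma exists_isCycle_of_isClique {s : Finset V} (hs : Γ.IsClique (s : Set V)) (h3 : 3 ≤ #s) :
    ∃ (u : V) (c : Γ.Walk u u), c.IsCycle ∧ ∀ x ∈ c.support, x ∈ s := by
  obtain ⟨a, ha, b, hb, c, hc, hab, hac, hbc⟩ := two_lt_card.1 h3
  refine ⟨a, .cons (hs ha hb hab) (.cons (hs hb hc hbc) (.cons (hs hc ha hac.symm) .nil)), ?_, ?_⟩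
  · simp [Walk.cons_isCycle_iff, hab, hac, hbc, hab.symm, hac.symm]
  · simp only [Walk.support_cons, Walk.support_nil, List.mem_cons, List.mem_nil_iff, or_false]
    rintro x (rfl | rfl | rfl | rfl) <;> assumption

/-- For `←`, delete every vertex off the two cycles. -/
theorem cyclicallySeparable_iff_exists_isCycle :
    CyclicallySeparable Γ ↔ ∃ (u v : V) (c : Γ.Walk u u) (d : Γ.Walk v v), c.IsCycle ∧
      d.IsCycle ∧ ∀ x ∈ c.support, ∀ y ∈ d.support, x ≠ y ∧ ¬Γ.Adj x y := by
  classical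
  constructor
  · rintro ⟨S, u, v, huv, ⟨u', hu, c, hc⟩, ⟨v', hv, d, hd⟩⟩
    have hι := (Embedding.induce (G := Γ) Sᶜ).injective
    refine ⟨_, _, c.map (Embedding.induce Sᶜ).toHom, d.map (Embedding.induce Sᶜ).toHom,
      hc.map hι, hd.map hι, ?_⟩
    simp only [Walk.support_map, List.mem_map]
    rintro _ ⟨x, hx, rfl⟩ _ ⟨y, hy, rfl⟩
    have hux : (Γ.induce Sᶜ).Reachable u x := hu.trans ⟨c.takeUntil x hx⟩
    have hvy : (Γ.induce Sᶜ).Reachable v y := hv.trans ⟨d.takeUntil y hy⟩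
    refine ⟨fun hxy => huv (hux.trans ?_), fun hxy => huv (hux.trans ?_)⟩
    · exact hι hxy ▸ hvy.symm
    · exact (induce_adj.2 hxy).reachable.trans hvy.symm
  · rintro ⟨u, v, c, d, hc, hd, hfar⟩
    let A : Set V := {x | x ∈ c.support ∨ x ∈ d.support}
    have hcA : ∀ x ∈ c.support, x ∈ A := fun x hx => Or.inl hx
    have hdA : ∀ x ∈ d.support, x ∈ A := fun x hx => Or.inr hx
    refine ⟨Aᶜ, ?_⟩
    unfold IsCyclicCutset
    rw [compl_compl]
    refine ⟨⟨u, hcA u c.start_mem_support⟩, ⟨v, hdA v d.start_mem_support⟩, fun huv => ?_,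
      ⟨_, .rfl, _, hc.induce hcA⟩, ⟨_, .rfl, _, hd.induce hdA⟩⟩
    have hvc : v ∈ c.support := by
      refine huv.mem_of_adj_closed (s := {x : A | (x : V) ∈ c.support}) ?_ c.start_mem_support
      rintro x ⟨y, hy | hy⟩ hx hxy
      · exact hy
      · exact absurd (induce_adj.1 hxy) (hfar _ hx _ hy).2
    exact (hfar v hvc v d.start_mem_support).1 rfl

lemma Walk.IsCycle.exists_preimage (f : Γ ↪g Γ') {a : W} {c : Γ'.Walk a a} (hc : c.IsCycle)
    (hcf : ∀ x ∈ c.support, x ∈ Set.range f) :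
    ∃ (u : V) (c' : Γ.Walk u u), c'.IsCycle ∧ ∀ x ∈ c'.support, f x ∈ c.support := by
  let e := f.isoInduceRange
  refine ⟨_, (c.induce _ hcf).map e.symm.toHom, (hc.induce hcf).map e.symm.injective, ?_⟩
  simp only [Walk.support_map, Walk.support_induce, List.mem_map, List.mem_attachWith]
  rintro _ ⟨y, hy, rfl⟩
  have hfy : f (e.symm y) = y := congrArg Subtype.val (e.apply_symm_apply y)
  simpa [hfy] using hy

theorem cyclicallySeparable_iff_of_embedding (f : Γ ↪g Γ')
    (hf : ∀ (a : W) (c : Γ'.Walk a a), c.IsCycle → ∀ x ∈ c.support, x ∈ Set.range f) :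
    CyclicallySeparable Γ ↔ CyclicallySeparable Γ' := by
  simp only [cyclicallySeparable_iff_exists_isCycle]
  constructor
  · rintro ⟨u, v, c, d, hc, hd, hfar⟩
    refine ⟨_, _, c.map f.toHom, d.map f.toHom, hc.map f.injective, hd.map f.injective, ?_⟩
    simp only [Walk.support_map, List.mem_map]
    rintro _ ⟨x, hx, rfl⟩ _ ⟨y, hy, rfl⟩
    exact ⟨f.injective.ne (hfar x hx y hy).1, f.map_adj_iff.not.2 (hfar x hx y hy).2⟩
  · rintro ⟨a, b, c, d, hc, hd, hfar⟩
    obtain ⟨u, c', hc', hcc'⟩ := hc.exists_preimage f (hf a c hc)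
    obtain ⟨v, d', hd', hdd'⟩ := hd.exists_preimage f (hf b d hd)
    refine ⟨u, v, c', d', hc', hd', fun x hx y hy => ?_⟩
    obtain ⟨hne, hnadj⟩ := hfar _ (hcc' x hx) _ (hdd' y hy)
    exact ⟨fun h => hne (congrArg f h), fun h => hnadj (f.map_adj_iff.2 h)⟩

end SimpleGraph

section PowerGraph

variable {G H : Type*} [Group G] [Group H]

lemma powerGraph_adj {x y : G} :
    (powerGraph G).Adj x y ↔ x ≠ y ∧ (x ∈ Subgroup.zpowers y ∨ y ∈ Subgroup.zpowers x) :=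
  Iff.rfl

def powerGraphEmbedding (f : G →* H) (hf : Function.Injective f) :
    powerGraph G ↪g powerGraph H where
  toFun := f
  inj' := hf
  map_rel_iff' {x y} := by
    simp only [Function.Embedding.coeFn_mk, powerGraph_adj, hf.ne_iff, ← f.map_zpowers,
      Subgroup.mem_map_iff_mem hf]

lemma image_orderOf_subset_divisors [Finite G] (s : Finset G) :
    s.image orderOf ⊆ (Nat.card G).divisors := fun d hd => by
  obtain ⟨x, -, rfl⟩ := mem_image.1 hd
  exact Nat.mem_divisors.2 ⟨orderOf_dvd_natCard x, Nat.card_pos.ne'⟩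

end PowerGraph

section Cyclic

variable {G : Type*} [Group G] [IsCyclic G]

/-- `zpowers y` has `orderOf y` elements, all solving `x ^ orderOf y = 1`, and a cyclic group has
at most that many solutions. -/
theorem mem_zpowers_iff_orderOf_dvd [Finite G] {x y : G} :
    x ∈ Subgroup.zpowers y ↔ orderOf x ∣ orderOf y := by
  classical
  have := Fintype.ofFinite G
  refine ⟨orderOf_dvd_of_mem_zpowers, fun h => ?_⟩
  have hsub : (Subgroup.zpowers y : Set G).toFinset ⊆ ({z | z ^ orderOf y = 1} : Finset G) :=
    fun z hz => by
      simpa [orderOf_dvd_iff_pow_eq_one] using orderOf_dvd_of_mem_zpowers (Set.mem_toFinset.1 hz)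
  have hcard : #(Subgroup.zpowers y : Set G).toFinset = orderOf y := by
    rw [Set.toFinset_card, ← Nat.card_eq_fintype_card]
    exact Nat.card_zpowers y
  have heq := eq_of_subset_of_card_le hsub <| by
    rw [hcard]
    exact IsCyclic.card_pow_eq_one_le (orderOf_pos y)
  have hx : x ∈ ({z | z ^ orderOf y = 1} : Finset G) := by
    simpa [orderOf_dvd_iff_pow_eq_one] using h
  rw [← heq] at hx
  simpa using hx

theorem powerGraph_adj_iff_of_isCyclic [Finite G] {x y : G} :
    (powerGraph G).Adj x y ↔ x ≠ y ∧ (orderOf x ∣ orderOf y ∨ orderOf y ∣ orderOf x) := by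
  rw [powerGraph_adj, mem_zpowers_iff_orderOf_dvd, mem_zpowers_iff_orderOf_dvd]

theorem card_filter_orderOf_mem [Fintype G] {O : Finset ℕ} (hO : O ⊆ (Nat.card G).divisors) :
    #{x : G | orderOf x ∈ O} = ∑ d ∈ O, φ d := by
  rw [card_eq_sum_card_fiberwise (s := {x : G | orderOf x ∈ O}) fun x hx => (mem_filter.1 hx).2]
  refine sum_congr rfl fun d hd => ?_
  rw [filter_filter, ← IsCyclic.card_orderOf_eq_totient
    (by simpa [Nat.card_eq_fintype_card] using Nat.dvd_of_mem_divisors (hO hd))]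
  congr 1
  exact filter_congr fun x _ => ⟨And.right, fun h => ⟨h ▸ hd, h⟩⟩

theorem card_le_sum_totient_image_orderOf [Fintype G] [DecidableEq G] (s : Finset G) :
    #s ≤ ∑ d ∈ s.image orderOf, φ d := by
  rw [← card_filter_orderOf_mem (image_orderOf_subset_divisors s)]
  exact card_le_card fun x hx => mem_filter.2 ⟨mem_univ x, mem_image_of_mem _ hx⟩

end Cyclic

/-- `O₁` and `O₂` play the role of the sets of element orders met by two cycles of the power graph
of the cyclic group of order `n` that neither meet nor are joined by an edge; `φ d` counts the
elements of order `d`. -/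
structure IsOrderSeparation (n : ℕ) (O₁ O₂ : Finset ℕ) : Prop where
  subset_left : O₁ ⊆ n.divisors
  subset_right : O₂ ⊆ n.divisors
  incomparable : ∀ a ∈ O₁, ∀ b ∈ O₂, ¬a ∣ b ∧ ¬b ∣ a
  three_le_sum_left : 3 ≤ ∑ d ∈ O₁, φ d
  three_le_sum_right : 3 ≤ ∑ d ∈ O₂, φ d

namespace IsOrderSeparation

variable {n : ℕ} {O₁ O₂ : Finset ℕ}

lemma symm (h : IsOrderSeparation n O₁ O₂) : IsOrderSeparation n O₂ O₁ :=
  ⟨h.subset_right, h.subset_left, fun a ha b hb => (h.incomparable b hb a ha).symm,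
    h.three_le_sum_right, h.three_le_sum_left⟩

lemma nonempty_left (h : IsOrderSeparation n O₁ O₂) : O₁.Nonempty := by
  by_contra hO
  have := h.three_le_sum_left
  simp [not_nonempty_iff_eq_empty.1 hO] at this

lemma ne_one_and_ne_self (h : IsOrderSeparation n O₁ O₂) {d : ℕ} (hd : d ∈ O₁) :
    d ≠ 1 ∧ d ≠ n := by
  obtain ⟨b, hb⟩ := h.symm.nonempty_left
  refine ⟨?_, ?_⟩ <;> rintro rfl
  · exact (h.incomparable _ hd b hb).1 (one_dvd b)
  · exact (h.incomparable _ hd b hb).2 (Nat.dvd_of_mem_divisors (h.subset_right hb))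

lemma mono {m : ℕ} (h : IsOrderSeparation m O₁ O₂) (hmn : m ∣ n) (hn : n ≠ 0) :
    IsOrderSeparation n O₁ O₂ :=
  ⟨h.subset_left.trans (Nat.divisors_subset_of_dvd hn hmn),
    h.subset_right.trans (Nat.divisors_subset_of_dvd hn hmn), h.incomparable,
    h.three_le_sum_left, h.three_le_sum_right⟩

lemma two_le_card_primeFactors (h : IsOrderSeparation n O₁ O₂) : 2 ≤ #n.primeFactors := by
  by_contra! hlt
  obtain ⟨a, ha⟩ := h.nonempty_left
  obtain ⟨b, hb⟩ := h.symm.nonempty_left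
  have hn : n ≠ 0 := (Nat.mem_divisors.1 (h.subset_left ha)).2
  obtain ⟨p, hp, k, rfl⟩ : ∃ p, p.Prime ∧ ∃ k, n = p ^ k := by
    rcases Nat.lt_succ_iff.1 hlt |>.lt_or_eq with h0 | h1
    · obtain rfl : n = 1 := by simpa [hn] using card_eq_zero.1 (Nat.lt_one_iff.1 h0)
      exact ⟨2, Nat.prime_two, 0, rfl⟩
    · obtain ⟨p, k, hp, -, rfl⟩ :=
        (isPrimePow_nat_iff n).1 (isPrimePow_iff_card_primeFactors_eq_one.2 h1)
      exact ⟨p, hp, k, rfl⟩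
  obtain ⟨i, -, rfl⟩ := (Nat.dvd_prime_pow hp).1 (Nat.dvd_of_mem_divisors (h.subset_left ha))
  obtain ⟨j, -, rfl⟩ := (Nat.dvd_prime_pow hp).1 (Nat.dvd_of_mem_divisors (h.subset_right hb))
  rcases le_total i j with hij | hji
  · exact (h.incomparable _ ha _ hb).1 (pow_dvd_pow p hij)
  · exact (h.incomparable _ ha _ hb).2 (pow_dvd_pow p hji)

lemma not_exists_eq_prime_mul_prime (h : IsOrderSeparation n O₁ O₂) :
    ¬∃ p q : ℕ, p.Prime ∧ q.Prime ∧ p < q ∧ p ≤ 3 ∧ n = p * q := by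
  rintro ⟨p, q, hp, hq, -, hp3, rfl⟩
  have hpq : ∀ {O O'}, IsOrderSeparation (p * q) O O' → ∀ d ∈ O, d ∉ ({p} : Finset ℕ) → d = q := by
    intro O O' h d hd hdp
    obtain ⟨hd1, hdpq⟩ := h.ne_one_and_ne_self hd
    obtain ⟨a, b, ha, hb, rfl⟩ := Nat.dvd_mul.1 (Nat.dvd_of_mem_divisors (h.subset_left hd))
    rcases hp.eq_one_or_self_of_dvd a ha with rfl | rfl <;>
      rcases hq.eq_one_or_self_of_dvd b hb with rfl | rfl <;> simp_all
  have hsmall : ∀ {O O'}, IsOrderSeparation (p * q) O O' → ¬O ⊆ {p} := by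
    intro O O' h hO
    have := h.three_le_sum_left.trans (sum_le_sum_of_subset hO)
    rw [sum_singleton, Nat.totient_prime hp] at this
    omega
  obtain ⟨d₁, hd₁, hd₁p⟩ := not_subset.1 (hsmall h)
  obtain ⟨d₂, hd₂, hd₂p⟩ := not_subset.1 (hsmall h.symm)
  have h₁ := hpq h d₁ hd₁ hd₁p
  have h₂ := hpq h.symm d₂ hd₂ hd₂p
  subst h₁ h₂
  exact (h.incomparable _ hd₁ _ hd₂).1 dvd_rfl

set_option maxRecDepth 10000 in
lemma ne_twelve (h : IsOrderSeparation n O₁ O₂) : n ≠ 12 := by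
  rintro rfl
  have key : ∀ O₁ ∈ (Nat.divisors 12).powerset, ∀ O₂ ∈ (Nat.divisors 12).powerset,
      (∀ a ∈ O₁, ∀ b ∈ O₂, ¬a ∣ b ∧ ¬b ∣ a) → ∑ d ∈ O₁, φ d < 3 ∨ ∑ d ∈ O₂, φ d < 3 := by
    decide
  have := key O₁ (mem_powerset.2 h.subset_left) O₂ (mem_powerset.2 h.subset_right) h.incomparable
  have := h.three_le_sum_left
  have := h.three_le_sum_right
  omega

end IsOrderSeparation

lemma exists_isChain_dvd_of_four_le {a : ℕ} (ha : 4 ≤ a) :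
    ∃ O : Finset ℕ, IsChain (· ∣ ·) (O : Set ℕ) ∧ (∀ d ∈ O, d ∣ a ∧ d ≠ 1) ∧
      3 ≤ ∑ d ∈ O, φ d := by
  have hp := Nat.minFac_prime (by omega : a ≠ 1)
  refine ⟨{a.minFac, a}, by rw [coe_pair]; exact IsChain.pair (Nat.minFac_dvd a), ?_, ?_⟩
  · simp only [mem_insert, mem_singleton]
    rintro d (rfl | rfl)
    · exact ⟨Nat.minFac_dvd _, hp.ne_one⟩
    · exact ⟨dvd_rfl, by omega⟩
  · by_cases hpa : a.minFac = a
    · rw [hpa, insert_eq_of_mem (mem_singleton_self a), sum_singleton, Nat.totient_prime (hpa ▸ hp)]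
      omega
    · have h1 : 0 < φ a.minFac := Nat.totient_pos.2 hp.pos
      have h2 : φ a ≠ 0 := (Nat.totient_pos.2 (by omega)).ne'
      have h3 : φ a ≠ 1 := fun h => by have := Nat.totient_eq_one_iff.1 h; omega
      rw [sum_pair hpa]
      omega

def HasChainSeparation (n : ℕ) : Prop :=
  ∃ O₁ O₂ : Finset ℕ, IsOrderSeparation n O₁ O₂ ∧ IsChain (· ∣ ·) (O₁ : Set ℕ) ∧
    IsChain (· ∣ ·) (O₂ : Set ℕ)

namespace HasChainSeparation

lemma mono {m n : ℕ} (h : HasChainSeparation m) (hmn : m ∣ n) (hn : n ≠ 0) :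
    HasChainSeparation n :=
  let ⟨O₁, O₂, hO, h₁, h₂⟩ := h
  ⟨O₁, O₂, hO.mono hmn hn, h₁, h₂⟩

lemma of_coprime {a b : ℕ} (hab : a.Coprime b) (ha : 4 ≤ a) (hb : 4 ≤ b) :
    HasChainSeparation (a * b) := by
  obtain ⟨O₁, h₁, hO₁, hs₁⟩ := exists_isChain_dvd_of_four_le ha
  obtain ⟨O₂, h₂, hO₂, hs₂⟩ := exists_isChain_dvd_of_four_le hb
  have hab0 : a * b ≠ 0 := by positivity
  refine ⟨O₁, O₂, ⟨?_, ?_, ?_, hs₁, hs₂⟩, h₁, h₂⟩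
  · exact fun d hd => Nat.mem_divisors.2 ⟨(hO₁ d hd).1.mul_right b, hab0⟩
  · exact fun d hd => Nat.mem_divisors.2 ⟨(hO₂ d hd).1.mul_left a, hab0⟩
  · intro d hd e he
    have hde : d.Coprime e := (hab.coprime_dvd_left (hO₁ d hd).1).coprime_dvd_right (hO₂ e he).1
    exact ⟨fun h => (hO₁ d hd).2 (hde.eq_one_of_dvd h),
      fun h => (hO₂ e he).2 (hde.symm.eq_one_of_dvd h)⟩

lemma prime_mul_sq {s r : ℕ} (hs : s.Prime) (hr : r.Prime) (hsr : s ≠ r) (hr3 : 3 ≤ r) :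
    HasChainSeparation (s * r ^ 2) := by
  have hn : s * r ^ 2 ≠ 0 := by have := hs.pos; have := hr.pos; positivity
  have hsr2 : ¬s ∣ r ^ 2 := fun h =>
    hsr ((Nat.prime_dvd_prime_iff_eq hs hr).1 (hs.dvd_of_dvd_pow h))
  have hrs : ¬r ∣ s := fun h => hsr ((Nat.prime_dvd_prime_iff_eq hr hs).1 h).symm
  have hs_ne : s ≠ s * r := ((Nat.lt_mul_iff_one_lt_right hs.pos).2 hr.one_lt).ne
  refine ⟨{s, s * r}, {r ^ 2}, ⟨?_, ?_, ?_, ?_, ?_⟩, ?_, ?_⟩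
  · simp only [insert_subset_iff, singleton_subset_iff, Nat.mem_divisors]
    exact ⟨⟨dvd_mul_right s _, hn⟩, ⟨mul_dvd_mul_left s (dvd_pow_self r two_ne_zero), hn⟩⟩
  · simp only [singleton_subset_iff, Nat.mem_divisors]
    exact ⟨dvd_mul_left _ _, hn⟩
  · simp only [mem_insert, mem_singleton]
    rintro a (rfl | rfl) b rfl
    · exact ⟨hsr2, fun h => hrs ((dvd_pow_self r two_ne_zero).trans h)⟩
    · refine ⟨fun h => hsr2 ((dvd_mul_right s r).trans h), fun h => hrs ?_⟩
      rw [sq] at h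
      exact Nat.dvd_of_mul_dvd_mul_right hr.pos h
  · rw [sum_pair hs_ne, Nat.totient_mul ((Nat.coprime_primes hs hr).2 hsr), Nat.totient_prime hs,
      Nat.totient_prime hr]
    have := hs.two_le
    have := Nat.mul_le_mul (Nat.sub_le_sub_right hs.two_le 1) (Nat.sub_le_sub_right hr3 1)
    omega
  · rw [sum_singleton, Nat.totient_prime_pow hr two_pos]
    have := Nat.mul_le_mul (by simpa using hr3 : 3 ≤ r ^ (2 - 1)) (Nat.sub_le_sub_right hr3 1)
    omega
  · rw [coe_pair]
    exact IsChain.pair (dvd_mul_right s r)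
  · rw [coe_singleton]
    exact Set.Subsingleton.isChain Set.subsingleton_singleton

lemma twentyFour : HasChainSeparation 24 :=
  ⟨{3, 6}, {4, 8}, ⟨by decide, by decide, by decide, by decide, by decide⟩,
    by rw [coe_pair]; exact IsChain.pair (by norm_num),
    by rw [coe_pair]; exact IsChain.pair (by norm_num)⟩

theorem of_two_le_card_primeFactors {n : ℕ} (hn : n ≠ 0) (h2 : 2 ≤ #n.primeFactors)
    (hpq : ¬∃ p q : ℕ, p.Prime ∧ q.Prime ∧ p < q ∧ p ≤ 3 ∧ n = p * q) (h12 : n ≠ 12) :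
    HasChainSeparation n := by
  obtain ⟨r, hr, hmax⟩ : ∃ r ∈ n.primeFactors, ∀ p ∈ n.primeFactors, p ≤ r :=
    ⟨_, max'_mem _ (card_pos.1 (by omega)), fun p hp => le_max' _ p hp⟩
  obtain ⟨s, hs, hsr⟩ := exists_mem_ne (by omega : 1 < #n.primeFactors) r
  have hsr' : s < r := (hmax s hs).lt_of_ne hsr
  rw [Nat.mem_primeFactors] at hr hs
  have hr3 : 3 ≤ r := by have := hs.1.two_le; omega
  by_cases hr2 : r ^ 2 ∣ n
  · refine (prime_mul_sq hs.1 hr.1 hsr hr3).mono ?_ hn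
    exact Nat.Coprime.mul_dvd_of_dvd_of_dvd (((Nat.coprime_primes hs.1 hr.1).2 hsr).pow_right 2)
      hs.2.1 hr2
  obtain ⟨m, rfl⟩ := hr.2.1
  have hrm : r.Coprime m :=
    (Nat.Prime.coprime_iff_not_dvd hr.1).2 fun h => hr2 (by rw [sq]; exact mul_dvd_mul_left r h)
  have hlt : ∀ p, p.Prime → p ∣ m → p < r := fun p hp hpm =>
    (hmax p (Nat.mem_primeFactors.2 ⟨hp, hpm.mul_left r, hn⟩)).lt_of_ne fun h =>
      (Nat.Prime.coprime_iff_not_dvd hr.1).1 hrm (h ▸ hpm)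
  have hm0 : m ≠ 0 := by rintro rfl; simp at hn
  by_cases hm4 : 4 ≤ m
  · by_cases hr4 : 4 ≤ r
    · exact of_coprime hrm hr4 hm4
    obtain rfl : r = 3 := by omega
    have hm : m = 2 ^ m.primeFactorsList.length := Nat.eq_prime_pow_of_unique_prime_dvd hm0
      fun {d} hd hdm => by have := hlt d hd hdm; have := hd.two_le; omega
    have hk : 3 ≤ m.primeFactorsList.length := by
      by_contra! hk
      interval_cases h : m.primeFactorsList.length <;> rw [hm] at hm4 h12 <;> simp at hm4 h12
    refine twentyFour.mono ?_ hn
    rw [hm]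
    exact mul_dvd_mul_left 3 (pow_dvd_pow 2 hk)
  · have hs1 : s ∣ m := (Nat.Coprime.dvd_of_dvd_mul_left
      ((Nat.coprime_primes hs.1 hr.1).2 hsr) hs.2.1)
    have hm1 : m ≠ 1 := by rintro rfl; exact hs.1.ne_one (Nat.dvd_one.1 hs1)
    have hmp : m.Prime := by interval_cases m <;> first | omega | norm_num
    exact (hpq ⟨m, r, hmp, hr.1, hlt m hmp dvd_rfl, by omega, mul_comm r m⟩).elim

end HasChainSeparation

section Cyclic

variable {G : Type*} [Group G] [Finite G] [IsCyclic G]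

theorem exists_isOrderSeparation_of_cyclicallySeparable
    (h : CyclicallySeparable (powerGraph G)) :
    ∃ O₁ O₂ : Finset ℕ, IsOrderSeparation (Nat.card G) O₁ O₂ := by
  classical
  have := Fintype.ofFinite G
  obtain ⟨u, v, c, d, hc, hd, hfar⟩ := cyclicallySeparable_iff_exists_isCycle.1 h
  refine ⟨c.support.toFinset.image orderOf, d.support.toFinset.image orderOf,
    ⟨image_orderOf_subset_divisors _, image_orderOf_subset_divisors _, ?_,
      hc.three_le_card_support_toFinset.trans (card_le_sum_totient_image_orderOf _),
      hd.three_le_card_support_toFinset.trans (card_le_sum_totient_image_orderOf _)⟩⟩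
  simp only [mem_image, List.mem_toFinset]
  rintro _ ⟨x, hx, rfl⟩ _ ⟨y, hy, rfl⟩
  have := hfar x hx y hy
  rw [powerGraph_adj_iff_of_isCyclic] at this
  tauto

/-- Elements whose orders form a divisibility chain are pairwise adjacent. -/
lemma exists_isCycle_orderOf_mem {O : Finset ℕ} (hO : O ⊆ (Nat.card G).divisors)
    (hchain : IsChain (· ∣ ·) (O : Set ℕ)) (h3 : 3 ≤ ∑ d ∈ O, φ d) :
    ∃ (u : G) (c : (powerGraph G).Walk u u), c.IsCycle ∧ ∀ x ∈ c.support, orderOf x ∈ O := by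
  have := Fintype.ofFinite G
  obtain ⟨u, c, hc, hcO⟩ := exists_isCycle_of_isClique (s := {x : G | orderOf x ∈ O})
    (fun x hx y hy hxy => powerGraph_adj_iff_of_isCyclic.2
      ⟨hxy, hchain.total (mem_filter.1 hx).2 (mem_filter.1 hy).2⟩)
    (by rwa [card_filter_orderOf_mem hO])
  exact ⟨u, c, hc, fun x hx => (mem_filter.1 (hcO x hx)).2⟩

theorem HasChainSeparation.cyclicallySeparable (h : HasChainSeparation (Nat.card G)) :
    CyclicallySeparable (powerGraph G) := by
  obtain ⟨O₁, O₂, hO, h₁, h₂⟩ := h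
  obtain ⟨u, c, hc, hcO⟩ := exists_isCycle_orderOf_mem hO.subset_left h₁ hO.three_le_sum_left
  obtain ⟨v, d, hd, hdO⟩ := exists_isCycle_orderOf_mem hO.subset_right h₂ hO.three_le_sum_right
  refine cyclicallySeparable_iff_exists_isCycle.2 ⟨u, v, c, d, hc, hd, fun x hx y hy => ?_⟩
  have := hO.incomparable _ (hcO x hx) _ (hdO y hy)
  rw [powerGraph_adj_iff_of_isCyclic]
  exact ⟨by rintro rfl; exact this.1 dvd_rfl, by tauto⟩

theorem cyclicallySeparable_powerGraph_iff_of_isCyclic :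
    CyclicallySeparable (powerGraph G) ↔
      2 ≤ #(Nat.card G).primeFactors ∧
        (¬∃ p q : ℕ, p.Prime ∧ q.Prime ∧ p < q ∧ p ≤ 3 ∧ Nat.card G = p * q) ∧
        Nat.card G ≠ 12 := by
  refine ⟨fun h => ?_, fun ⟨h2, hpq, h12⟩ => ?_⟩
  · obtain ⟨O₁, O₂, hO⟩ := exists_isOrderSeparation_of_cyclicallySeparable h
    exact ⟨hO.two_le_card_primeFactors, hO.not_exists_eq_prime_mul_prime, hO.ne_twelve⟩
  · exact (HasChainSeparation.of_two_le_card_primeFactors Nat.card_pos.ne' h2 hpq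
      h12).cyclicallySeparable

end Cyclic

namespace DihedralGroup

variable {n : ℕ}

def rotations (n : ℕ) : Multiplicative (ZMod n) →* DihedralGroup n where
  toFun i := r i.toAdd
  map_one' := rfl
  map_mul' _ _ := rfl

lemma rotations_injective : Function.Injective (rotations n) :=
  fun _ _ h => r.inj h

lemma sr_zpow_eq_one_or_eq (k : ZMod n) (m : ℤ) : sr k ^ m = 1 ∨ sr k ^ m = sr k := by
  rw [← zpow_mod_orderOf, orderOf_sr]
  rcases Int.emod_two_eq_zero_or_one m with h | h <;> simp [h]

lemma powerGraph_neighborSet_sr (k : ZMod n) :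
    (powerGraph (DihedralGroup n)).neighborSet (sr k) ⊆ {1} := by
  rintro y ⟨hne, hky | hyk⟩
  · obtain ⟨m, hm⟩ := Subgroup.mem_zpowers_iff.1 hky
    cases y with
    | r i => simp [r_zpow] at hm
    | sr j =>
      rcases sr_zpow_eq_one_or_eq j m with h | h <;> rw [h] at hm
      · rw [one_def] at hm
        cases hm
      · exact absurd hm.symm hne
  · obtain ⟨m, rfl⟩ := Subgroup.mem_zpowers_iff.1 hyk
    rcases sr_zpow_eq_one_or_eq k m with h | h
    · exact h
    · exact absurd h.symm hne

theorem cyclicallySeparable_powerGraph_iff :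
    CyclicallySeparable (powerGraph (DihedralGroup n)) ↔
      CyclicallySeparable (powerGraph (Multiplicative (ZMod n))) := by
  refine (cyclicallySeparable_iff_of_embedding
    (powerGraphEmbedding (rotations n) rotations_injective) fun a c hc x hx => ?_).symm
  cases x with
  | r i => exact ⟨Multiplicative.ofAdd i, rfl⟩
  | sr k => exact absurd hx (hc.notMem_support_of_subsingleton
      (Set.subsingleton_singleton.anti (powerGraph_neighborSet_sr k)))

end DihedralGroup

theorem stmt16_general (n : ℕ) [NeZero n] :
    (CyclicallySeparable (powerGraph (DihedralGroup n)) ↔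
      CyclicallySeparable (powerGraph (Multiplicative (ZMod n)))) ∧
    (CyclicallySeparable (powerGraph (DihedralGroup n)) ↔
      (2 ≤ n.primeFactors.card ∧
       (¬ ∃ p q : ℕ, p.Prime ∧ q.Prime ∧ p < q ∧ p ≤ 3 ∧ n = p * q) ∧
       n ≠ 12)) := by
  have hcyclic := cyclicallySeparable_powerGraph_iff_of_isCyclic (G := Multiplicative (ZMod n))
  rw [Nat.card_eq_fintype_card, Fintype.card_multiplicative, ZMod.card] at hcyclic
  exact ⟨DihedralGroup.cyclicallySeparable_powerGraph_iff,
    DihedralGroup.cyclicallySeparable_powerGraph_iff.trans hcyclic⟩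

/-- The power graph of D_{2n} is cyclically separable iff that of C_n is;
equivalently iff n has at least two prime factors, n ≠ p₁p₂ with p₁ ≤ 3,
and n ≠ 12. -/
theorem stmt16 (n : ℕ) [NeZero n] (hn : 3 ≤ n) :
    (CyclicallySeparable (powerGraph (DihedralGroup n)) ↔
      CyclicallySeparable (powerGraph (Multiplicative (ZMod n)))) ∧
    (CyclicallySeparable (powerGraph (DihedralGroup n)) ↔
      (2 ≤ n.primeFactors.card ∧
       (¬ ∃ p q : ℕ, p.Prime ∧ q.Prime ∧ p < q ∧ p ≤ 3 ∧ n = p * q) ∧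
       n ≠ 12)) :=
  stmt16_general n
end
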